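/- The perfect domination number of the 8×4 knights graph equals 16. -/

import Mathlib

def knightAdj (p q : ℤ × ℤ) : Prop :=
  (|p.1 - q.1| = 1 ∧ |p.2 - q.2| = 2) ∨ (|p.1 - q.1| = 2 ∧ |p.2 - q.2| = 1)

lemma knightAdj_symm {p q : ℤ × ℤ} (h : knightAdj p q) : knightAdj q p := by
  unfold knightAdj at *
  rcases h with ⟨h1, h2⟩ | ⟨h1, h2⟩
  · left; rw [abs_sub_comm, abs_sub_comm q.2]; exact ⟨h1, h2⟩
  · right; rw [abs_sub_comm, abs_sub_comm q.2]; exact ⟨h1, h2⟩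

lemma knightAdj_irrefl (p : ℤ × ℤ) : ¬ knightAdj p p := by
  unfold knightAdj; simp

/-- The knights graph on an `n`-column, `m`-row chessboard. -/
def KN (n m : ℕ) : SimpleGraph (Fin n × Fin m) where
  Adj p q := knightAdj ((p.1 : ℤ), (p.2 : ℤ)) ((q.1 : ℤ), (q.2 : ℤ))
  symm := ⟨fun _ _ h => knightAdj_symm h⟩
  loopless := ⟨fun p => knightAdj_irrefl _⟩

/-- The infinite knights graph on `ℤ × ℤ`. -/
def KNZZ : SimpleGraph (ℤ × ℤ) where
  Adj := knightAdj
  symm := ⟨fun _ _ h => knightAdj_symm h⟩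
  loopless := ⟨knightAdj_irrefl⟩

/-- The quarter-infinite knights graph on `ℕ × ℕ`. -/
def KNNN : SimpleGraph (ℕ × ℕ) where
  Adj p q := knightAdj ((p.1 : ℤ), (p.2 : ℤ)) ((q.1 : ℤ), (q.2 : ℤ))
  symm := ⟨fun _ _ h => knightAdj_symm h⟩
  loopless := ⟨fun p => knightAdj_irrefl _⟩

/-- The half-plane knights graph on `ℤ × ℕ`. -/
def KNZN : SimpleGraph (ℤ × ℕ) where
  Adj p q := knightAdj (p.1, (p.2 : ℤ)) (q.1, (q.2 : ℤ))
  symm := ⟨fun _ _ h => knightAdj_symm h⟩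
  loopless := ⟨fun p => knightAdj_irrefl _⟩

/-- `S` is a perfect dominating set of `G`: every vertex not in `S` is adjacent to
exactly one vertex of `S`. -/
def IsPerfDomSet {V : Type*} (G : SimpleGraph V) (S : Set V) : Prop :=
  ∀ v ∉ S, ∃! u, u ∈ S ∧ G.Adj v u

/-- The perfect domination number of `G`. -/
noncomputable def perfDomNum {V : Type*} (G : SimpleGraph V) : ℕ :=
  sInf {k | ∃ S : Set V, IsPerfDomSet G S ∧ S.ncard = k}


/-!
A finite set `T` of squares is a perfect dominating set iff, in every column, each unoccupied
square is a knight's move away from exactly one square of `T`; this involves only that column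
and the two columns on either side. Recording `T` column by column (eight subsets of `Fin 4`),
the bound `16 ≤ #T` becomes a finite statement about sequences of eight columns, settled by an
exhaustive left-to-right search which abandons a prefix as soon as one of its columns is over-
or under-dominated. Two squares per column, alternating in pairs, attain the bound.
-/

open Finset

instance (p q : ℤ × ℤ) : Decidable (knightAdj p q) := by
  unfold knightAdj; infer_instance

instance (n m : ℕ) : DecidableRel (KN n m).Adj := fun _ _ =>
  inferInstanceAs (Decidable (knightAdj _ _))

theorem isPerfDomSet_coe_iff {V : Type*} (G : SimpleGraph V) [DecidableRel G.Adj]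
    (T : Finset V) : IsPerfDomSet G ↑T ↔ ∀ v ∉ T, #{u ∈ T | G.Adj v u} = 1 := by
  simp only [IsPerfDomSet, mem_coe, card_eq_one_iff_existsUnique, mem_filter]

theorem perfDomNum_eq {V : Type*} [Finite V] (G : SimpleGraph V) {k : ℕ}
    (hex : ∃ T : Finset V, IsPerfDomSet G ↑T ∧ #T = k)
    (hle : ∀ T : Finset V, IsPerfDomSet G ↑T → k ≤ #T) : perfDomNum G = k := by
  obtain ⟨T, hT, rfl⟩ := hex
  have hmem : #T ∈ {k | ∃ S : Set V, IsPerfDomSet G S ∧ S.ncard = k} :=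
    ⟨T, hT, Set.ncard_coe_finset T⟩
  refine le_antisymm (Nat.sInf_le hmem) (le_csInf ⟨_, hmem⟩ ?_)
  rintro _ ⟨S, hS, rfl⟩
  lift S to Finset V using S.toFinite
  rw [Set.ncard_coe_finset]
  exact hle S hS

def knightMoves : Finset (ℤ × ℤ) :=
  {(1, 2), (1, -2), (-1, 2), (-1, -2), (2, 1), (2, -1), (-2, 1), (-2, -1)}

theorem knightAdj_iff_sub_mem_knightMoves (p q : ℤ × ℤ) :
    knightAdj p q ↔ q - p ∈ knightMoves := by
  obtain ⟨a, b⟩ := p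
  obtain ⟨c, d⟩ := q
  simp only [knightAdj, knightMoves, mem_insert, mem_singleton, Prod.mk_sub_mk, Prod.mk.injEq]
  rw [abs_sub_comm a, abs_sub_comm b, abs_eq zero_le_one, abs_eq zero_le_two, abs_eq zero_le_one,
    abs_eq zero_le_two]
  grind

section Columns

variable {n m : ℕ}

def coord (v : Fin n × Fin m) : ℤ × ℤ := (v.1, v.2)

theorem coord_injective : Function.Injective (coord : Fin n × Fin m → ℤ × ℤ) := by
  rintro ⟨a, b⟩ ⟨c, d⟩ h
  simp only [coord, Prod.mk.injEq, Nat.cast_inj, Fin.val_inj] at h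
  rw [h.1, h.2]

theorem card_filter_knightAdj (T : Finset (Fin n × Fin m)) (v : Fin n × Fin m) :
    #{u ∈ T | (KN n m).Adj v u} = #{d ∈ knightMoves | coord v + d ∈ T.image coord} := by
  refine card_nbij (fun u => coord u - coord v) ?_ ?_ ?_
  · intro u hu
    simp only [coe_filter, Set.mem_ofPred_eq, mem_image] at hu ⊢
    exact ⟨(knightAdj_iff_sub_mem_knightMoves _ _).1 hu.2, u, hu.1, by abel⟩
  · intro u _ w _ h
    exact coord_injective (sub_left_injective h)
  · intro d hd
    simp only [coe_filter, Set.mem_ofPred_eq, mem_image, Set.mem_image] at hd ⊢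
    obtain ⟨hd, u, hu, hvu⟩ := hd
    have hd' : coord u - coord v = d := by rw [hvu, add_sub_cancel_left]
    exact ⟨u, ⟨hu, (knightAdj_iff_sub_mem_knightMoves _ _).2 (hd' ▸ hd)⟩, hd'⟩

def column (T : Finset (Fin n × Fin m)) (i : ℤ) (b : Fin m) : Bool :=
  decide ((i, (b : ℤ)) ∈ T.image coord)

def rowVal (x : Fin m → Bool) (j : ℤ) : ℕ :=
  if h : 0 ≤ j ∧ j < m then (x ⟨j.toNat, by omega⟩).toNat else 0

theorem rowVal_column (T : Finset (Fin n × Fin m)) (i j : ℤ) :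
    rowVal (column T i) j = if (i, j) ∈ T.image coord then 1 else 0 := by
  unfold rowVal column
  split_ifs with hj hmem hmem
  · simp [Int.toNat_of_nonneg hj.1, hmem]
  · simp [Int.toNat_of_nonneg hj.1, hmem]
  · obtain ⟨u, -, hu⟩ := mem_image.1 hmem
    simp only [coord, Prod.mk.injEq] at hu
    omega
  · rfl

/-- The number of occupied squares a knight's move away from row `b` of the middle column of
five consecutive columns `p q _ s t`. -/
def windowCount (p q s t : Fin m → Bool) (b : ℤ) : ℕ :=
  rowVal p (b - 1) + rowVal p (b + 1) + rowVal q (b - 2) + rowVal q (b + 2) +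
  rowVal s (b - 2) + rowVal s (b + 2) + rowVal t (b - 1) + rowVal t (b + 1)

theorem card_filter_knightAdj_eq_windowCount (T : Finset (Fin n × Fin m)) (v : Fin n × Fin m) :
    #{u ∈ T | (KN n m).Adj v u} = windowCount (column T (v.1 - 2)) (column T (v.1 - 1))
      (column T (v.1 + 1)) (column T (v.1 + 2)) v.2 := by
  rw [card_filter_knightAdj, card_filter, knightMoves]
  repeat rw [sum_insert (by decide)]
  simp only [sum_singleton, windowCount, rowVal_column, coord, Prod.mk_add_mk, ← sub_eq_add_neg]
  ac_rfl

theorem column_natCast (T : Finset (Fin n × Fin m)) (i : Fin n) (b : Fin m) :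
    column T i b = decide ((i, b) ∈ T) := by
  simp only [column, ← coord.eq_def (i, b), coord_injective.mem_finset_image]

theorem column_eq_false (T : Finset (Fin n × Fin m)) {i : ℤ} (hi : i < 0 ∨ n ≤ i) :
    column T i = fun _ => false := by
  funext b
  simp only [column, decide_eq_false_iff_not, mem_image, not_exists, not_and]
  intro u _ hu
  simp only [coord, Prod.mk.injEq] at hu
  omega

def popcount (x : Fin m → Bool) : ℕ := ∑ b, (x b).toNat

theorem card_eq_sum_popcount_column (T : Finset (Fin n × Fin m)) :
    #T = ∑ i : Fin n, popcount (column T i) :=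
  calc #T = ∑ v, if v ∈ T then 1 else 0 := by simp
    _ = ∑ i, ∑ b, if (i, b) ∈ T then 1 else 0 := Fintype.sum_prod_type _
    _ = ∑ i : Fin n, popcount (column T i) := by
      simp only [popcount, column_natCast, Bool.toNat, Bool.cond_decide]

def WindowOK (p q r s t : Fin m → Bool) : Prop :=
  ∀ b : Fin m, r b = false → windowCount p q s t b = 1

instance (p q r s t : Fin m → Bool) : Decidable (WindowOK p q r s t) :=
  inferInstanceAs (Decidable (∀ _ : Fin m, _))

theorem isPerfDomSet_coe_iff_windowOK (T : Finset (Fin n × Fin m)) :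
    IsPerfDomSet (KN n m) ↑T ↔ ∀ i : Fin n, WindowOK (column T (i - 2)) (column T (i - 1))
      (column T i) (column T (i + 1)) (column T (i + 2)) := by
  simp only [isPerfDomSet_coe_iff, WindowOK, column_natCast, decide_eq_false_iff_not,
    Prod.forall, card_filter_knightAdj_eq_windowCount]

/-- What `WindowOK p q r s t` already forces before the last column `t` is known. -/
def PartialWindowOK (p q r s : Fin m → Bool) : Prop :=
  ∀ b : Fin m, r b = false → windowCount p q s (fun _ => false) b ≤ 1

instance (p q r s : Fin m → Bool) : Decidable (PartialWindowOK p q r s) :=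
  inferInstanceAs (Decidable (∀ _ : Fin m, _))

theorem WindowOK.partialWindowOK {p q r s t : Fin m → Bool} (h : WindowOK p q r s t) :
    PartialWindowOK p q r s := by
  intro b hb
  have hrow : ∀ j, rowVal (fun _ : Fin m => false) j = 0 := fun j => by
    unfold rowVal; split_ifs <;> rfl
  have := h b hb
  simp only [windowCount, hrow] at this ⊢
  omega

end Columns

section Board84

local notation "∅c" => (fun _ => false : Fin 4 → Bool)

/- Each column is tested as soon as the columns it depends on are chosen, and bounded from
above one column earlier; this keeps the search carried out by `decide` small. -/
set_option synthInstance.maxSize 256 in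
theorem sixteen_le_sum_popcount_search :
    ∀ x₀ x₁ : Fin 4 → Bool, PartialWindowOK ∅c ∅c x₀ x₁ →
    ∀ x₂ : Fin 4 → Bool, WindowOK ∅c ∅c x₀ x₁ x₂ → PartialWindowOK ∅c x₀ x₁ x₂ →
    ∀ x₃ : Fin 4 → Bool, WindowOK ∅c x₀ x₁ x₂ x₃ → PartialWindowOK x₀ x₁ x₂ x₃ →
    ∀ x₄ : Fin 4 → Bool, WindowOK x₀ x₁ x₂ x₃ x₄ → PartialWindowOK x₁ x₂ x₃ x₄ →
    ∀ x₅ : Fin 4 → Bool, WindowOK x₁ x₂ x₃ x₄ x₅ → PartialWindowOK x₂ x₃ x₄ x₅ →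
    ∀ x₆ : Fin 4 → Bool, WindowOK x₂ x₃ x₄ x₅ x₆ → PartialWindowOK x₃ x₄ x₅ x₆ →
    ∀ x₇ : Fin 4 → Bool, WindowOK x₃ x₄ x₅ x₆ x₇ → WindowOK x₄ x₅ x₆ x₇ ∅c →
    WindowOK x₅ x₆ x₇ ∅c ∅c →
    16 ≤ popcount x₀ + popcount x₁ + popcount x₂ + popcount x₃ + popcount x₄ + popcount x₅ +
      popcount x₆ + popcount x₇ := by
  decide +kernel

theorem sixteen_le_sum_popcount (x : ℤ → Fin 4 → Bool) (hx : ∀ i, i < 0 ∨ 8 ≤ i → x i = ∅c)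
    (hok : ∀ i : Fin 8, WindowOK (x (i - 2)) (x (i - 1)) (x i) (x (i + 1)) (x (i + 2))) :
    16 ≤ ∑ i : Fin 8, popcount (x i) := by
  have h0 := hok 0
  have h1 := hok 1
  have h2 := hok 2
  have h3 := hok 3
  have h4 := hok 4
  have h5 := hok 5
  have h6 := hok 6
  have h7 := hok 7
  norm_num at h0 h1 h2 h3 h4 h5 h6 h7
  simp only [hx (-2) (by norm_num), hx (-1) (by norm_num), hx 8 (by norm_num),
    hx 9 (by norm_num)] at h0 h1 h6 h7
  rw [Fin.sum_univ_eight]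
  exact sixteen_le_sum_popcount_search _ _ h0.partialWindowOK _ h0 h1.partialWindowOK _ h1
    h2.partialWindowOK _ h2 h3.partialWindowOK _ h3 h4.partialWindowOK _ h4 h5.partialWindowOK
    _ h5 h6 h7

theorem sixteen_le_card_of_isPerfDomSet (T : Finset (Fin 8 × Fin 4))
    (hT : IsPerfDomSet (KN 8 4) ↑T) : 16 ≤ #T := by
  rw [card_eq_sum_popcount_column]
  exact sixteen_le_sum_popcount (column T) (fun _ hi => column_eq_false T hi)
    ((isPerfDomSet_coe_iff_windowOK T).1 hT)

def knight84PerfDomSet : Finset (Fin 8 × Fin 4) :=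
  {(0, 1), (0, 3), (1, 0), (1, 2), (2, 0), (2, 2), (3, 1), (3, 3),
   (4, 1), (4, 3), (5, 0), (5, 2), (6, 0), (6, 2), (7, 1), (7, 3)}

theorem isPerfDomSet_knight84PerfDomSet : IsPerfDomSet (KN 8 4) ↑knight84PerfDomSet :=
  (isPerfDomSet_coe_iff _ _).2 (by decide)

theorem card_knight84PerfDomSet : #knight84PerfDomSet = 16 := by decide

end Board84

theorem stmt12 : perfDomNum (KN 8 4) = 16 :=
  perfDomNum_eq _ ⟨_, isPerfDomSet_knight84PerfDomSet, card_knight84PerfDomSet⟩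
    sixteen_le_card_of_isPerfDomSet
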